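/- arXiv:0806.2222 — 8 statements merged into one kernel-verified Lean document; each statement's English description precedes it below -/
import Mathlib

section
/- For every integer k ≥ 0 and every sequence i_1, …, i_k of elements of {1, …, n−1}, one has id·S_{i_1}·S_{i_2}·⋯·S_{i_k} = (id·S_{i_k}·S_{i_{k−1}}·⋯·S_{i_1})^{−1}; that is, applying the sorting operators in one order starting from the identity yields the inverse of the permutation obtained by applying them in the reverse order. (Lemma 2.1) -/
/-- The sorting operator `S_i`, acting on the right of a permutation of `Fin n`.
Positions are 1-based: for `1 ≤ i ≤ n-1`, the positions `i` and `i+1` correspond to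
the `Fin n` indices `i-1` and `i`.  `σ·S_i := σ * τ_i` (where `(σ * τ)(x) = σ(τ(x))`)
if the values of `σ` at positions `i`, `i+1` are in increasing order, and `σ·S_i := σ`
otherwise. -/
def sortOp (n : ℕ) (i : ℕ) (σ : Equiv.Perm (Fin n)) : Equiv.Perm (Fin n) :=
  if h : 1 ≤ i ∧ i < n then
    let p : Fin n := ⟨i - 1, lt_of_le_of_lt (Nat.sub_le i 1) h.2⟩
    let q : Fin n := ⟨i, h.2⟩
    if σ p < σ q then σ * Equiv.swap p q else σ
  else σ

/-- The left sorting operator. -/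
def leftOp (n : ℕ) (i : ℕ) (σ : Equiv.Perm (Fin n)) : Equiv.Perm (Fin n) :=
  if h : 1 ≤ i ∧ i < n then
    let p : Fin n := ⟨i - 1, lt_of_le_of_lt (Nat.sub_le i 1) h.2⟩
    let q : Fin n := ⟨i, h.2⟩
    if σ⁻¹ p < σ⁻¹ q then Equiv.swap p q * σ else σ
  else σ

lemma adj_swap_lt {n : ℕ} (p q a b : Fin n) (hpq : (p : ℕ) + 1 = q)
    (hab : a < b) (hne : ¬(a = p ∧ b = q)) :
    Equiv.swap p q a < Equiv.swap p q b := by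
  have hne' : ¬((a:ℕ) = (p:ℕ) ∧ (b:ℕ) = (q:ℕ)) := by
    simpa [Fin.ext_iff] using hne
  rw [Fin.lt_def] at hab ⊢
  rw [Equiv.swap_apply_def, Equiv.swap_apply_def]
  split_ifs <;> simp only [Fin.ext_iff] at * <;> omega

lemma sortOp_inv (n i : ℕ) (σ : Equiv.Perm (Fin n)) :
    (sortOp n i σ)⁻¹ = leftOp n i σ⁻¹ := by
  unfold sortOp leftOp
  split_ifs with h
  · simp only [inv_inv]
    split_ifs with h2
    · simp [mul_inv_rev]
    · rfl
  · rfl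

lemma leftOp_sortOp_comm (n i j : ℕ) (σ : Equiv.Perm (Fin n)) :
    leftOp n i (sortOp n j σ) = sortOp n j (leftOp n i σ) := by
  unfold sortOp leftOp
  by_cases hi : 1 ≤ i ∧ i < n
  · by_cases hj : 1 ≤ j ∧ j < n
    · simp only [dif_pos hi, dif_pos hj]
      set p : Fin n := ⟨i - 1, lt_of_le_of_lt (Nat.sub_le i 1) hi.2⟩ with hp
      set q : Fin n := ⟨i, hi.2⟩ with hq
      set r : Fin n := ⟨j - 1, lt_of_le_of_lt (Nat.sub_le j 1) hj.2⟩ with hr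
      set s : Fin n := ⟨j, hj.2⟩ with hs
      have hpq : (p : ℕ) + 1 = (q : ℕ) := by simp [hp, hq]; omega
      have hrs : (r : ℕ) + 1 = (s : ℕ) := by simp [hr, hs]; omega
      have hrs' : r ≠ s := by
        intro h; rw [Fin.ext_iff] at h; omega
      have hpq' : p ≠ q := by
        intro h; rw [Fin.ext_iff] at h; omega
      by_cases hc2 : σ r < σ s
      · by_cases hc1 : σ⁻¹ p < σ⁻¹ q
        · -- case B2
          by_cases hmid : σ r = p ∧ σ s = q
          · have e1 : σ⁻¹ p = r := by rw [← hmid.1]; simp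
            have e2 : σ⁻¹ q = s := by rw [← hmid.2]; simp
            rw [if_pos hc2, if_pos hc1]
            have cL : ¬ ((σ * Equiv.swap r s)⁻¹ p < (σ * Equiv.swap r s)⁻¹ q) := by
              simp only [mul_inv_rev, Equiv.Perm.mul_apply, Equiv.swap_inv, e1, e2,
                Equiv.swap_apply_left, Equiv.swap_apply_right]
              simp only [Fin.lt_def]; omega
            have cR : ¬ ((Equiv.swap p q * σ) r < (Equiv.swap p q * σ) s) := by
              simp only [Equiv.Perm.mul_apply, hmid.1, hmid.2,
                Equiv.swap_apply_left, Equiv.swap_apply_right]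
              simp only [Fin.lt_def]; omega
            rw [if_neg cL, if_neg cR]
            rw [Equiv.mul_swap_eq_swap_mul, hmid.1, hmid.2]
          · have cL : (σ * Equiv.swap r s)⁻¹ p < (σ * Equiv.swap r s)⁻¹ q := by
              simp only [mul_inv_rev, Equiv.Perm.mul_apply, Equiv.swap_inv]
              apply adj_swap_lt r s _ _ hrs hc1
              intro ⟨h1, h2⟩
              exact hmid ⟨by rw [← h1]; simp, by rw [← h2]; simp⟩
            have cR : (Equiv.swap p q * σ) r < (Equiv.swap p q * σ) s := by
              simp only [Equiv.Perm.mul_apply]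
              exact adj_swap_lt p q _ _ hpq hc2 hmid
            rw [if_pos hc2, if_pos hc1, if_pos cL, if_pos cR, mul_assoc]
        · -- case B1
          have cL : ¬ ((σ * Equiv.swap r s)⁻¹ p < (σ * Equiv.swap r s)⁻¹ q) := by
            simp only [mul_inv_rev, Equiv.Perm.mul_apply, Equiv.swap_inv, not_lt]
            apply le_of_lt
            apply adj_swap_lt r s _ _ hrs
            · rcases lt_or_eq_of_le (not_lt.mp hc1) with h | h
              · exact h
              · exact absurd (σ⁻¹.injective h) (Ne.symm hpq')
            · intro ⟨h1, h2⟩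
              have : σ r = q := by rw [← h1]; simp
              have : σ s = p := by rw [← h2]; simp
              rw [Fin.lt_def] at hc2
              simp_all; omega
          rw [if_pos hc2, if_neg hc1, if_neg cL, if_pos hc2]
      · by_cases hc1 : σ⁻¹ p < σ⁻¹ q
        · -- case A with c1
          have cR : ¬ ((Equiv.swap p q * σ) r < (Equiv.swap p q * σ) s) := by
            simp only [Equiv.Perm.mul_apply, not_lt]
            apply le_of_lt
            apply adj_swap_lt p q _ _ hpq
            · rcases lt_or_eq_of_le (not_lt.mp hc2) with h | h
              · exact h
              · exact absurd (σ.injective h) (Ne.symm hrs')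
            · intro ⟨h1, h2⟩
              have e1 : σ⁻¹ p = s := by rw [← h1]; simp
              have e2 : σ⁻¹ q = r := by rw [← h2]; simp
              rw [Fin.lt_def, e1, e2] at hc1
              omega
          rw [if_neg hc2, if_pos hc1, if_neg cR]
        · rw [if_neg hc2, if_neg hc1, if_neg hc2]
    · simp only [dif_neg hj, dif_pos hi]
  · by_cases hj : 1 ≤ j ∧ j < n
    · simp only [dif_neg hi, dif_pos hj]
    · simp only [dif_neg hi, dif_neg hj]

lemma leftOp_one (n i : ℕ) : leftOp n i 1 = sortOp n i 1 := by
  unfold leftOp sortOp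
  split_ifs with h <;> simp

lemma foldl_inv (n : ℕ) (l : List ℕ) (σ : Equiv.Perm (Fin n)) :
    (l.foldl (fun σ i => sortOp n i σ) σ)⁻¹
      = l.foldl (fun σ i => leftOp n i σ) σ⁻¹ := by
  induction l generalizing σ with
  | nil => rfl
  | cons a t ih => simp only [List.foldl_cons, ih, sortOp_inv]

lemma leftOp_foldl (n a : ℕ) (l : List ℕ) (σ : Equiv.Perm (Fin n)) :
    leftOp n a (l.foldl (fun σ i => sortOp n i σ) σ)
      = l.foldl (fun σ i => sortOp n i σ) (leftOp n a σ) := by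
  induction l generalizing σ with
  | nil => rfl
  | cons b t ih => simp only [List.foldl_cons, ih, leftOp_sortOp_comm]

lemma foldl_rev (n : ℕ) (l : List ℕ) :
    l.reverse.foldl (fun σ i => leftOp n i σ) 1
      = l.foldl (fun σ i => sortOp n i σ) 1 := by
  induction l with
  | nil => rfl
  | cons a t ih =>
    simp only [List.reverse_cons, List.foldl_append, List.foldl_cons, List.foldl_nil,
      ih, leftOp_foldl, leftOp_one]

/-- Lemma 2.1: for any sequence `i₁, …, i_k` of elements of `{1, …, n-1}`,
`id·S_{i₁}·⋯·S_{i_k} = (id·S_{i_k}·⋯·S_{i₁})⁻¹`. -/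
theorem oriented_swap_reverse_inverse (n : ℕ) (l : List ℕ)
    (hl : ∀ i ∈ l, 1 ≤ i ∧ i ≤ n - 1) :
    l.foldl (fun σ i => sortOp n i σ) 1
      = (l.reverse.foldl (fun σ i => sortOp n i σ) 1)⁻¹ := by
  rw [foldl_inv, inv_one]
  exact (foldl_rev n l).symm
end

section
/- For every configuration ρ ∈ Ω₀, every n ∈ ℤ and every x ∈ ℤ, one has S(B_n ρ, x) = min(S(ρ, x), max(n−x, 0)). (Equation (5)) Consequently, the operators B_n and R_k commute: B_n R_k ρ = R_k B_n ρ for all ρ ∈ Ω₀ and all k ≥ 0, n ∈ ℤ. -/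
open Set

/-- `Ω₀`: a configuration `ρ : ℤ → Bool` is admissible when its support
`{x : ℤ | ρ x = true}` is bounded above. -/
def BddSupport (ρ : ℤ → Bool) : Prop := BddAbove {x : ℤ | ρ x = true}

/-- The queue-length `S(ρ, x)`: the number of particles of `ρ` strictly to the right
of `x`. -/
noncomputable def qS (ρ : ℤ → Bool) (x : ℤ) : ℕ :=
  {y : ℤ | x < y ∧ ρ y = true}.ncard

/-- The cut-off operator `R_k`: keeps only the `k` rightmost particles. -/
noncomputable def Rk (k : ℕ) (ρ : ℤ → Bool) : ℤ → Bool :=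
  fun x => if qS ρ x < k then ρ x else false

/-- The push-back operator `B_n`: pushes all particles back into `(-∞, n]`,
preserving the exclusion. -/
noncomputable def Bn (n : ℤ) (ρ : ℤ → Bool) : ℤ → Bool :=
  fun x =>
    if n < x then false
    else if n - x < (qS ρ x : ℤ) then true
    else ρ x

/-- The jump operator `J_m`: exchanges the values of `ρ` at `m` and `m+1` if
`ρ(m) = 1` and `ρ(m+1) = 0`, and leaves `ρ` unchanged otherwise. -/
def Jm (m : ℤ) (ρ : ℤ → Bool) : ℤ → Bool :=
  fun x =>
    if ρ m = true ∧ ρ (m + 1) = false then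
      if x = m then ρ (m + 1) else if x = m + 1 then ρ m else ρ x
    else ρ x

lemma qS_finite {ρ : ℤ → Bool} (h : BddSupport ρ) (x : ℤ) :
    {y : ℤ | x < y ∧ ρ y = true}.Finite := by
  obtain ⟨M, hM⟩ := h
  exact (Set.finite_Ioc x M).subset (fun y hy => ⟨hy.1, hM hy.2⟩)

lemma qS_zero {ρ : ℤ → Bool} {M : ℤ} (hM : ∀ y, ρ y = true → y ≤ M)
    {x : ℤ} (hx : M ≤ x) : qS ρ x = 0 := by
  unfold qS
  convert Set.ncard_empty ℤ
  ext y
  simp only [Set.mem_setOf_eq, Set.mem_empty_iff_false, iff_false, not_and]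
  intro h1 h2
  exact absurd (hM y h2) (by omega)

lemma qS_rec {ρ : ℤ → Bool} (h : BddSupport ρ) (x : ℤ) :
    qS ρ x = qS ρ (x + 1) + (if ρ (x + 1) = true then 1 else 0) := by
  by_cases h1 : ρ (x + 1) = true
  · rw [if_pos h1]
    have hset : {y : ℤ | x < y ∧ ρ y = true} =
        insert (x + 1) {y : ℤ | x + 1 < y ∧ ρ y = true} := by
      ext y
      simp only [Set.mem_setOf_eq, Set.mem_insert_iff]
      constructor
      · rintro ⟨hy, hr⟩
        rcases eq_or_lt_of_le (by omega : x + 1 ≤ y) with h' | h'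
        · exact Or.inl h'.symm
        · exact Or.inr ⟨h', hr⟩
      · rintro (rfl | ⟨hy, hr⟩)
        · exact ⟨by omega, h1⟩
        · exact ⟨by omega, hr⟩
    rw [qS, hset, Set.ncard_insert_of_notMem (by simp) (qS_finite h (x + 1)), qS]
  · rw [if_neg h1]
    have hset : {y : ℤ | x < y ∧ ρ y = true} = {y : ℤ | x + 1 < y ∧ ρ y = true} := by
      ext y
      simp only [Set.mem_setOf_eq]
      constructor
      · rintro ⟨hy, hr⟩
        refine ⟨?_, hr⟩
        rcases eq_or_lt_of_le (by omega : x + 1 ≤ y) with h' | h'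
        · exact absurd hr (h' ▸ h1)
        · exact h'
      · rintro ⟨hy, hr⟩; exact ⟨by omega, hr⟩
    rw [qS, hset, qS]; omega

lemma int_down_induction (M : ℤ) (P : ℤ → Prop)
    (base : ∀ x, M ≤ x → P x) (step : ∀ x, x < M → P (x + 1) → P x) : ∀ x, P x := by
  have key : ∀ m : ℕ, ∀ x : ℤ, M - x ≤ m → P x := by
    intro m
    induction m with
    | zero => intro x hx; exact base x (by omega)
    | succ m ih =>
        intro x hx
        by_cases h : M ≤ x
        · exact base x h
        · exact step x (by omega) (ih (x + 1) (by omega))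
  intro x
  exact key (M - x).toNat x (by omega)

lemma bddBn (n : ℤ) (ρ : ℤ → Bool) : BddSupport (Bn n ρ) := by
  refine ⟨n, fun y hy => ?_⟩
  by_contra hc
  push_neg at hc
  have hBn : Bn n ρ y = false := by simp [Bn, hc]
  rw [Set.mem_setOf_eq, hBn] at hy
  exact Bool.false_ne_true hy

lemma Bn_le {n : ℤ} {ρ : ℤ → Bool} {y : ℤ} (h : Bn n ρ y = true) : y ≤ n := by
  by_contra hc
  push_neg at hc
  simp [Bn, hc] at h

lemma Rk_le {k : ℕ} {ρ : ℤ → Bool} {y : ℤ} (h : Rk k ρ y = true) : ρ y = true := by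
  simp only [Rk] at h
  split at h
  · exact h
  · exact absurd h (by simp)

lemma bddRk (k : ℕ) {ρ : ℤ → Bool} (h : BddSupport ρ) : BddSupport (Rk k ρ) := by
  obtain ⟨M, hM⟩ := h
  exact ⟨M, fun y hy => hM (Rk_le hy)⟩

/-- Equation (5). -/
lemma qS_Bn {ρ : ℤ → Bool} (h : BddSupport ρ) (n x : ℤ) :
    (qS (Bn n ρ) x : ℤ) = min (qS ρ x : ℤ) (max (n - x) 0) := by
  refine int_down_induction n
    (fun x => (qS (Bn n ρ) x : ℤ) = min (qS ρ x : ℤ) (max (n - x) 0)) ?_ ?_ x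
  · intro x hx
    have h0 : qS (Bn n ρ) x = 0 := qS_zero (fun y hy => Bn_le hy) hx
    rw [h0]
    omega
  · intro x hx ih
    have hrecB := qS_rec (bddBn n ρ) x
    have hrec := qS_rec h x
    have hB : Bn n ρ (x + 1) =
        if n - (x + 1) < (qS ρ (x + 1) : ℤ) then true else ρ (x + 1) := by
      simp only [Bn, if_neg (by omega : ¬ n < x + 1)]
    rw [hB] at hrecB
    by_cases hc : n - (x + 1) < (qS ρ (x + 1) : ℤ) <;>
      by_cases hr : ρ (x + 1) = true <;>
        simp only [hc, hr, if_true, if_false, ite_true, ite_false, Bool.false_eq_true,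
          not_false_eq_true, add_zero] at hrec hrecB <;>
      omega

lemma qS_Rk {ρ : ℤ → Bool} (h : BddSupport ρ) (k : ℕ) (x : ℤ) :
    qS (Rk k ρ) x = min (qS ρ x) k := by
  obtain ⟨M, hM⟩ := h
  have hM' : ∀ y, ρ y = true → y ≤ M := fun y hy => hM hy
  refine int_down_induction M (fun x => qS (Rk k ρ) x = min (qS ρ x) k) ?_ ?_ x
  · intro x hx
    rw [qS_zero hM' hx, qS_zero (fun y hy => hM' y (Rk_le hy)) hx]
    simp
  · intro x hx ih
    have hrecR := qS_rec (bddRk k ⟨M, hM⟩) x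
    have hrec := qS_rec ⟨M, hM⟩ x
    have hR : Rk k ρ (x + 1) = if qS ρ (x + 1) < k then ρ (x + 1) else false := rfl
    rw [hR] at hrecR
    by_cases hc : qS ρ (x + 1) < k <;>
      by_cases hr : ρ (x + 1) = true <;>
        simp only [hc, hr, if_true, if_false, ite_true, ite_false, Bool.false_eq_true,
          not_false_eq_true, add_zero] at hrec hrecR <;>
      omega

/-- Equation (5): `S(B_n ρ, x) = min(S(ρ, x), (n - x)⁺)`, and consequently the
operators `B_n` and `R_k` commute. -/
theorem qS_Bn_and_comm :
    (∀ (ρ : ℤ → Bool), BddSupport ρ → ∀ (n x : ℤ),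
      (qS (Bn n ρ) x : ℤ) = min (qS ρ x : ℤ) (max (n - x) 0))
    ∧ (∀ (ρ : ℤ → Bool), BddSupport ρ → ∀ (k : ℕ) (n : ℤ),
      Bn n (Rk k ρ) = Rk k (Bn n ρ)) := by
  refine ⟨fun ρ h n x => qS_Bn h n x, ?_⟩
  intro ρ h k n
  funext x
  have h1 : (qS (Rk k ρ) x : ℤ) = min (qS ρ x : ℤ) (k : ℤ) := by
    have := qS_Rk h k x
    omega
  have h2 := qS_Bn h n x
  have hb : qS (Bn n ρ) x < k ↔ min (qS ρ x : ℤ) (max (n - x) 0) < (k : ℤ) := by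
    omega
  rw [show Bn n (Rk k ρ) x =
        (if n < x then false
         else if n - x < (qS (Rk k ρ) x : ℤ) then true else Rk k ρ x) from rfl,
      show Rk k (Bn n ρ) x =
        (if qS (Bn n ρ) x < k then Bn n ρ x else false) from rfl,
      show Rk k ρ x = (if qS ρ x < k then ρ x else false) from rfl,
      show Bn n ρ x =
        (if n < x then false
         else if n - x < (qS ρ x : ℤ) then true else ρ x) from rfl,
      h1]
  simp only [hb]
  split_ifs <;> first | rfl | (exfalso; omega)
end

section
/- Let n ∈ ℤ, k ≥ 0, and let m be an integer with 1 ≤ m ≤ n−1. Then for every configuration ρ ∈ Ω₀ one has B_n R_k J_m ρ = J_m B_n R_k ρ. (Lemma 3.2(i)) -/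
open Set

/- Both `R_k` and `B_n` decide the new value at `x` from `x`, `ρ x` and `S(ρ, x)` alone. A jump at
`m` moves one particle past an empty site, so it changes neither the values nor the queue-lengths
away from the window `{m, m+1}`; on the window, the queue-length at `m` is the one at `m+1` plus
the occupation of `m+1`. Hence such an operator commutes with `J_m` as soon as a finite check on
the window succeeds, and the check succeeds for `R_k` always and for `B_n` whenever `m + 1 ≤ n`. -/

noncomputable def queueLocal (f : ℤ → Bool → ℕ → Bool) (ρ : ℤ → Bool) : ℤ → Bool :=
  fun x => f x (ρ x) (qS ρ x)

def jumpPair : Bool × Bool → Bool × Bool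
  | (true, false) => (false, true)
  | p => p

/-- `queueLocal f` on the window `(ρ m, ρ (m+1))` when `s = S(ρ, m+1)`, so that `S(ρ, m)` is
`s + toNat (ρ (m+1))`. -/
def pairRule (f : ℤ → Bool → ℕ → Bool) (m : ℤ) (s : ℕ) (p : Bool × Bool) : Bool × Bool :=
  (f m p.1 (s + p.2.toNat), f (m + 1) p.2 s)

lemma BddSupport.finite_setOf_lt {ρ : ℤ → Bool} (hρ : BddSupport ρ) (x : ℤ) :
    {y : ℤ | x < y ∧ ρ y = true}.Finite := by
  obtain ⟨N, hN⟩ := hρ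
  exact (finite_Icc (x + 1) N).subset fun y ⟨hxy, hy⟩ => ⟨by omega, hN hy⟩

lemma qS_eq_qS_succ_add {ρ : ℤ → Bool} (hρ : BddSupport ρ) (x : ℤ) :
    qS ρ x = qS ρ (x + 1) + (ρ (x + 1)).toNat := by
  have hsplit : {y : ℤ | x < y ∧ ρ y = true}
      = {y | x + 1 < y ∧ ρ y = true} ∪ {y | y = x + 1 ∧ ρ y = true} := by
    ext y
    simp only [mem_ofPred_eq, mem_union]
    constructor
    · rintro ⟨hxy, hy⟩
      rcases eq_or_ne y (x + 1) with rfl | hne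
      · exact Or.inr ⟨rfl, hy⟩
      · exact Or.inl ⟨by omega, hy⟩
    · rintro (⟨hxy, hy⟩ | ⟨rfl, hy⟩) <;> exact ⟨by omega, hy⟩
  have hdisj : Disjoint {y : ℤ | x + 1 < y ∧ ρ y = true} {y | y = x + 1 ∧ ρ y = true} :=
    disjoint_left.2 fun y ⟨hxy, _⟩ ⟨hy, _⟩ => by omega
  have hsite : {y : ℤ | y = x + 1 ∧ ρ y = true}.ncard = (ρ (x + 1)).toNat := by
    have hset : {y : ℤ | y = x + 1 ∧ ρ y = true} = {y | y = x + 1 ∧ ρ (x + 1) = true} := by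
      ext y
      constructor <;> rintro ⟨rfl, hy⟩ <;> exact ⟨rfl, hy⟩
    cases h : ρ (x + 1) <;> simp [hset, h]
  unfold qS
  rw [hsplit, ncard_union_eq hdisj (hρ.finite_setOf_lt _)
    ((finite_singleton (x + 1)).subset fun y hy => hy.1), hsite]

lemma qS_comp_perm (ρ : ℤ → Bool) (e : Equiv.Perm ℤ) {x : ℤ} (he : ∀ y, x < e y ↔ x < y) :
    qS (ρ ∘ e) x = qS ρ x := by
  have hpre : {y : ℤ | x < y ∧ (ρ ∘ e) y = true} = e ⁻¹' {y | x < y ∧ ρ y = true} := by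
    ext y
    simp only [mem_ofPred_eq, mem_preimage, Function.comp_apply, he]
  unfold qS
  rw [hpre, ncard_preimage_of_injective_subset_range e.injective (by simp)]

lemma Jm_eq_self_or_comp_swap (m : ℤ) (ρ : ℤ → Bool) :
    Jm m ρ = ρ ∨ Jm m ρ = ρ ∘ Equiv.swap m (m + 1) := by
  by_cases h : ρ m = true ∧ ρ (m + 1) = false
  · right
    funext x
    simp only [Jm, if_pos h, Function.comp_apply, Equiv.swap_apply_def]
    split_ifs <;> rfl
  · left
    funext x
    simp only [Jm, if_neg h]

lemma Jm_apply_of_ne {m x : ℤ} (ρ : ℤ → Bool) (hm : x ≠ m) (hm' : x ≠ m + 1) :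
    Jm m ρ x = ρ x := by
  simp [Jm, hm, hm']

lemma Jm_pair (m : ℤ) (ρ : ℤ → Bool) :
    (Jm m ρ m, Jm m ρ (m + 1)) = jumpPair (ρ m, ρ (m + 1)) := by
  simp only [Jm, if_true, show m + 1 ≠ m by omega, if_false]
  cases ρ m <;> cases ρ (m + 1) <;> rfl

/-- The jump only reorders the window `{m, m+1}`, which lies on one side of every `x ≠ m`. -/
lemma qS_Jm_of_ne {m x : ℤ} (ρ : ℤ → Bool) (hx : x ≠ m) : qS (Jm m ρ) x = qS ρ x := by
  rcases Jm_eq_self_or_comp_swap m ρ with h | h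
  · rw [h]
  · rw [h]
    refine qS_comp_perm ρ _ fun y => ?_
    rw [Equiv.swap_apply_def]
    split_ifs <;> omega

lemma bddSupport_Jm {ρ : ℤ → Bool} (hρ : BddSupport ρ) (m : ℤ) : BddSupport (Jm m ρ) := by
  obtain ⟨N, hN⟩ := hρ
  refine ⟨max N (m + 1), fun x hx => ?_⟩
  by_cases hwin : x = m ∨ x = m + 1
  · rcases hwin with rfl | rfl <;> simp
  · push Not at hwin
    rw [mem_ofPred_eq, Jm_apply_of_ne ρ hwin.1 hwin.2] at hx
    exact le_max_of_le_left (hN hx)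

lemma bddSupport_Rk {ρ : ℤ → Bool} (hρ : BddSupport ρ) (k : ℕ) : BddSupport (Rk k ρ) := by
  obtain ⟨N, hN⟩ := hρ
  refine ⟨N, fun x hx => hN ?_⟩
  simp only [mem_ofPred_eq, Rk] at hx ⊢
  split_ifs at hx
  exact hx

lemma pairRule_qS (f : ℤ → Bool → ℕ → Bool) (m : ℤ) {ρ : ℤ → Bool} (hρ : BddSupport ρ) :
    pairRule f m (qS ρ (m + 1)) (ρ m, ρ (m + 1)) = (queueLocal f ρ m, queueLocal f ρ (m + 1)) := by
  simp only [pairRule, queueLocal, ← qS_eq_qS_succ_add hρ]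

theorem queueLocal_Jm_comm (f : ℤ → Bool → ℕ → Bool) (m : ℤ)
    (hf : ∀ s p, pairRule f m s (jumpPair p) = jumpPair (pairRule f m s p))
    {ρ : ℤ → Bool} (hρ : BddSupport ρ) :
    queueLocal f (Jm m ρ) = Jm m (queueLocal f ρ) := by
  have hwindow : (queueLocal f (Jm m ρ) m, queueLocal f (Jm m ρ) (m + 1))
      = (Jm m (queueLocal f ρ) m, Jm m (queueLocal f ρ) (m + 1)) := by
    rw [← pairRule_qS f m (bddSupport_Jm hρ m), Jm_pair, qS_Jm_of_ne ρ (by omega), hf,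
      pairRule_qS f m hρ, Jm_pair]
  funext x
  by_cases hwin : x = m ∨ x = m + 1
  · rcases hwin with rfl | rfl
    · exact congrArg Prod.fst hwindow
    · exact congrArg Prod.snd hwindow
  · push Not at hwin
    simp only [queueLocal, Jm_apply_of_ne _ hwin.1 hwin.2, qS_Jm_of_ne ρ hwin.1]

theorem Rk_Jm_comm (k : ℕ) (m : ℤ) {ρ : ℤ → Bool} (hρ : BddSupport ρ) :
    Rk k (Jm m ρ) = Jm m (Rk k ρ) := by
  refine queueLocal_Jm_comm (fun _ b s => if s < k then b else false) m ?_ hρ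
  rintro s ⟨_ | _, _ | _⟩ <;> by_cases h : s < k <;> by_cases h' : s + 1 < k <;>
    simp [pairRule, jumpPair, h, h']
  all_goals omega

theorem Bn_Jm_comm {n m : ℤ} (hmn : m ≤ n - 1) {ρ : ℤ → Bool} (hρ : BddSupport ρ) :
    Bn n (Jm m ρ) = Jm m (Bn n ρ) := by
  refine queueLocal_Jm_comm
    (fun x b s => if n < x then false else if n - x < (s : ℤ) then true else b) m ?_ hρ
  have hm : ¬n < m := by omega
  have hm' : ¬n < m + 1 := by omega
  rintro s ⟨_ | _, _ | _⟩ <;> by_cases h : n - (m + 1) < (s : ℤ) <;>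
    by_cases h' : n - m < (s : ℤ) <;> simp [pairRule, jumpPair, hm, hm', h, h'] <;> omega

theorem Bn_Rk_Jm_comm_general (n : ℤ) (k : ℕ) (m : ℤ) (hm2 : m ≤ n - 1)
    (ρ : ℤ → Bool) (hρ : BddSupport ρ) :
    Bn n (Rk k (Jm m ρ)) = Jm m (Bn n (Rk k ρ)) := by
  rw [Rk_Jm_comm k m hρ, Bn_Jm_comm hm2 (bddSupport_Rk hρ k)]

/-- Lemma 3.2(i): if `1 ≤ m ≤ n - 1`, then `B_n R_k J_m = J_m B_n R_k`. -/
theorem Bn_Rk_Jm_comm (n : ℤ) (k : ℕ) (m : ℤ) (hm1 : 1 ≤ m) (hm2 : m ≤ n - 1)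
    (ρ : ℤ → Bool) (hρ : BddSupport ρ) :
    Bn n (Rk k (Jm m ρ)) = Jm m (Bn n (Rk k ρ)) :=
  Bn_Rk_Jm_comm_general n k m hm2 ρ hρ
end

section
/- For every σ ∈ 𝔖_n, every k with 0 ≤ k ≤ n, and every i with 1 ≤ i ≤ n−1, one has T_k(σ·S_i) = J_i(T_k σ); that is, sorting positions i, i+1 of the permutation into decreasing order and then thresholding at k is the same as thresholding at k and then performing a TASEP jump at position i. (Deterministic core of Lemma 3.1) -/
/-- The thresholding map `T_k`: `(T_k σ)(x) = 1` iff the (1-based) label `σ(x)` is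
at most `k`. -/
def thresh (n k : ℕ) (σ : Equiv.Perm (Fin n)) : Fin n → Bool :=
  fun x => decide ((σ x : ℕ) + 1 ≤ k)

/-- The jump operator `J_i` on 0/1-configurations on `{1, …, n}` (1-based positions
`i`, `i+1` correspond to `Fin n` indices `i-1`, `i`): exchange the values at positions
`i` and `i+1` if there is a particle at `i` and a hole at `i+1`. -/
def jumpOp (n : ℕ) (i : ℕ) (ν : Fin n → Bool) : Fin n → Bool :=
  if h : 1 ≤ i ∧ i < n then
    let p : Fin n := ⟨i - 1, lt_of_le_of_lt (Nat.sub_le i 1) h.2⟩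
    let q : Fin n := ⟨i, h.2⟩
    if ν p = true ∧ ν q = false then
      fun x => if x = p then ν q else if x = q then ν p else ν x
    else ν
  else ν

/-!
Below the threshold `k` only the relative order of `σ p` and `σ q` matters. If `σ p < σ q`
then `σ q ≤ k` forces `σ p ≤ k`, so the two thresholded values either coincide (and the swap
made by `S_i` is invisible after thresholding) or form a particle followed by a hole (and the
swap is exactly the jump). If `σ p > σ q`, neither operator moves anything.
-/

open Equiv

lemma Equiv.comp_swap_eq_self {α β : Type*} [DecidableEq α] {ν : α → β} {p q : α}
    (h : ν p = ν q) : ν ∘ swap p q = ν := by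
  funext x
  rw [Function.comp_apply, swap_apply_def]
  split_ifs <;> simp_all

lemma ite_update_eq_comp_swap {α β : Type*} [DecidableEq α] (ν : α → β) (p q : α) :
    (fun x => if x = p then ν q else if x = q then ν p else ν x) = ν ∘ swap p q := by
  funext x
  rw [Function.comp_apply, swap_apply_def]
  split_ifs <;> rfl

section thresh

variable {n k : ℕ} (σ : Perm (Fin n))

lemma thresh_mul (τ : Perm (Fin n)) : thresh n k (σ * τ) = thresh n k σ ∘ τ := rfl

lemma thresh_of_le {p q : Fin n} (hpq : σ p ≤ σ q) (hq : thresh n k σ q = true) :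
    thresh n k σ p = true := by
  simp only [thresh, decide_eq_true_eq] at hq ⊢
  have : (σ p : ℕ) ≤ σ q := hpq
  omega

lemma thresh_ite_mul_swap (p q : Fin n) :
    thresh n k (if σ p < σ q then σ * swap p q else σ) =
      if thresh n k σ p = true ∧ thresh n k σ q = false then thresh n k σ ∘ swap p q
      else thresh n k σ := by
  by_cases hlt : σ p < σ q
  · rw [if_pos hlt, thresh_mul]
    split_ifs with hjump
    · rfl
    · refine comp_swap_eq_self ?_
      have hq_imp_hp : thresh n k σ q = true → thresh n k σ p = true := thresh_of_le σ hlt.le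
      revert hjump hq_imp_hp
      cases thresh n k σ p <;> cases thresh n k σ q <;> simp
  · have hno_jump : ¬ (thresh n k σ p = true ∧ thresh n k σ q = false) := fun ⟨hp, hq⟩ => by
      simp [thresh_of_le σ (not_lt.mp hlt) hp] at hq
    rw [if_neg hlt, if_neg hno_jump]

end thresh

theorem thresh_sortOp_general (n k i : ℕ) (σ : Equiv.Perm (Fin n)) :
    thresh n k (sortOp n i σ) = jumpOp n i (thresh n k σ) := by
  unfold sortOp jumpOp
  split_ifs with h
  · dsimp only
    rw [thresh_ite_mul_swap, ite_update_eq_comp_swap]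
  · rfl

/-- Deterministic core of Lemma 3.1: `T_k (σ·S_i) = J_i (T_k σ)` for all
`σ ∈ 𝔖_n`, `0 ≤ k ≤ n` and `1 ≤ i ≤ n-1`. -/
theorem thresh_sortOp (n k i : ℕ) (hk : k ≤ n) (hi1 : 1 ≤ i) (hi2 : i ≤ n - 1)
    (σ : Equiv.Perm (Fin n)) :
    thresh n k (sortOp n i σ) = jumpOp n i (thresh n k σ) :=
  thresh_sortOp_general n k i σ
end

section
/- Let 1 ≤ k ≤ n be integers and let ρ, ρ' ∈ Ω₀ be compatible configurations such that ρ has at least k particles. Then the pair B_n R_k ρ, B_n R_{k−1} ρ' is compatible, and its second-class particle is at position Σ_{B_n R_k ρ, B_n R_{k−1} ρ'} = min( max(Σ_{ρ,ρ'}, π_ρ(k)), θ_{R_k ρ}(n, S(R_k ρ, n)) ). (Lemma 7.1, equation (19)) -/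
open Set

/-- Two configurations `ρ, ρ'` are compatible with second-class particle at `x` if
they differ exactly at `x`, where `ρ(x) = 1` and `ρ'(x) = 0`. -/
def Compat (ρ ρ' : ℤ → Bool) (x : ℤ) : Prop :=
  ρ x = true ∧ ρ' x = false ∧ ∀ y : ℤ, y ≠ x → ρ y = ρ' y

/-- `IsKthParticle ρ k p` says that `p` is the position of the `k`-th rightmost
particle of `ρ` (for `k ≥ 1`): `ρ(p) = 1` and there are exactly `k - 1` particles
strictly to the right of `p`.  In particular its existence expresses that `ρ` has at
least `k` particles. -/
def IsKthParticle (ρ : ℤ → Bool) (k : ℕ) (p : ℤ) : Prop :=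
  ρ p = true ∧ qS ρ p = k - 1

/-- `IsKthHole ρ n j t` says that `t = θ_ρ(n, j)`, the position of the `j`-th
rightmost hole of `ρ` in `(-∞, n]`; by convention `θ_ρ(n, 0) = n + 1`. -/
def IsKthHole (ρ : ℤ → Bool) (n : ℤ) (j : ℕ) (t : ℤ) : Prop :=
  if j = 0 then t = n + 1
  else t ≤ n ∧ ρ t = false ∧ {y : ℤ | t < y ∧ y ≤ n ∧ ρ y = false}.ncard = j - 1

section Aux

/-- All right-tail particle sets are finite. -/
def QFin (σ : ℤ → Bool) : Prop := ∀ y : ℤ, {z : ℤ | y < z ∧ σ z = true}.Finite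

lemma qfin_of_bdd {σ : ℤ → Bool} (h : BddSupport σ) : QFin σ := by
  obtain ⟨b, hb⟩ := h
  intro y
  apply Set.Finite.subset (Set.finite_Ioc y b)
  rintro z ⟨h1, h2⟩
  exact ⟨h1, hb h2⟩

lemma bool_eq_of_iff {a b : Bool} (h : a = true ↔ b = true) : a = b := by
  cases a <;> cases b <;> simp_all

/-- number of holes of `σ` in `(y, n]`. -/
noncomputable def Hn (σ : ℤ → Bool) (n y : ℤ) : ℕ :=
  {z : ℤ | y < z ∧ z ≤ n ∧ σ z = false}.ncard

/-- number of particles of `σ` in `(y, n]`. -/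
noncomputable def Pn (σ : ℤ → Bool) (n y : ℤ) : ℕ :=
  {z : ℤ | y < z ∧ z ≤ n ∧ σ z = true}.ncard

lemma hfinH {σ : ℤ → Bool} {n y : ℤ} : {z : ℤ | y < z ∧ z ≤ n ∧ σ z = false}.Finite :=
  Set.Finite.subset (Set.finite_Ioc y n) (fun z hz => ⟨hz.1, hz.2.1⟩)

lemma hfinP {σ : ℤ → Bool} {n y : ℤ} : {z : ℤ | y < z ∧ z ≤ n ∧ σ z = true}.Finite :=
  Set.Finite.subset (Set.finite_Ioc y n) (fun z hz => ⟨hz.1, hz.2.1⟩)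

lemma qS_mono {σ : ℤ → Bool} (h : QFin σ) {y y' : ℤ} (hyy : y ≤ y') :
    qS σ y' ≤ qS σ y :=
  Set.ncard_le_ncard (fun z hz => ⟨lt_of_le_of_lt hyy hz.1, hz.2⟩) (h y)

lemma qS_particle {σ : ℤ → Bool} (h : QFin σ) {y u : ℤ} (hyu : y < u) (hu : σ u = true) :
    qS σ u + 1 ≤ qS σ y := by
  have hins : insert u {z : ℤ | u < z ∧ σ z = true} ⊆ {z : ℤ | y < z ∧ σ z = true} := by
    rintro z (rfl | ⟨h1, h2⟩)
    · exact ⟨hyu, hu⟩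
    · exact ⟨hyu.trans h1, h2⟩
  have hcard : (insert u {z : ℤ | u < z ∧ σ z = true}).ncard = qS σ u + 1 :=
    Set.ncard_insert_of_notMem (by simp) (h u)
  calc qS σ u + 1 = _ := hcard.symm
    _ ≤ qS σ y := Set.ncard_le_ncard hins (h y)

lemma qS_split {σ : ℤ → Bool} (h : QFin σ) {n y : ℤ} (hyn : y ≤ n) :
    qS σ y = Pn σ n y + qS σ n := by
  have hset : {z : ℤ | y < z ∧ σ z = true}
      = {z : ℤ | y < z ∧ z ≤ n ∧ σ z = true} ∪ {z : ℤ | n < z ∧ σ z = true} := by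
    ext z
    simp only [Set.mem_setOf_eq, Set.mem_union]
    constructor
    · rintro ⟨h1, h2⟩
      rcases le_or_gt z n with h3 | h3
      · exact Or.inl ⟨h1, h3, h2⟩
      · exact Or.inr ⟨h3, h2⟩
    · rintro (⟨h1, h2, h3⟩ | ⟨h1, h2⟩)
      · exact ⟨h1, h3⟩
      · exact ⟨lt_of_le_of_lt hyn h1, h2⟩
  have hdisj : Disjoint {z : ℤ | y < z ∧ z ≤ n ∧ σ z = true} {z : ℤ | n < z ∧ σ z = true} := by
    rw [Set.disjoint_left]
    rintro z ⟨_, h2, _⟩ ⟨h3, _⟩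
    omega
  simp only [qS, Pn]
  rw [hset, Set.ncard_union_eq hdisj hfinP (h n)]

lemma HP_sum (σ : ℤ → Bool) {n y : ℤ} (hyn : y ≤ n) :
    Hn σ n y + Pn σ n y = (n - y).toNat := by
  have hset : Set.Ioc y n = {z : ℤ | y < z ∧ z ≤ n ∧ σ z = false}
      ∪ {z : ℤ | y < z ∧ z ≤ n ∧ σ z = true} := by
    ext z
    simp only [Set.mem_Ioc, Set.mem_union, Set.mem_setOf_eq]
    constructor
    · rintro ⟨h1, h2⟩
      cases hσ : σ z
      · exact Or.inl ⟨h1, h2, rfl⟩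
      · exact Or.inr ⟨h1, h2, rfl⟩
    · rintro (⟨h1, h2, _⟩ | ⟨h1, h2, _⟩) <;> exact ⟨h1, h2⟩
  have hdisj : Disjoint {z : ℤ | y < z ∧ z ≤ n ∧ σ z = false}
      {z : ℤ | y < z ∧ z ≤ n ∧ σ z = true} := by
    rw [Set.disjoint_left]
    rintro z ⟨_, _, h3⟩ ⟨_, _, h4⟩
    rw [h3] at h4
    cases h4
  have hcard : (Set.Ioc y n).ncard = (n - y).toNat := by
    rw [← Finset.coe_Ioc, Set.ncard_coe_finset, Int.card_Ioc]
  rw [← hcard, hset, Set.ncard_union_eq hdisj hfinH hfinP]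
  rfl

lemma Bn_gt {σ : ℤ → Bool} {n y : ℤ} (h : n < y) : Bn n σ y = false := by
  simp [Bn, h]

lemma Bn_iff {σ : ℤ → Bool} (h : QFin σ) {n y : ℤ} (hyn : y ≤ n) :
    Bn n σ y = true ↔ (σ y = true ∨ Hn σ n y < qS σ n) := by
  have hq := qS_split h hyn
  have hhp := HP_sum σ hyn
  have hcond : (n - y < (qS σ y : ℤ)) ↔ Hn σ n y < qS σ n := by omega
  rw [Bn]
  rw [if_neg (not_lt.mpr hyn)]
  by_cases h2 : n - y < (qS σ y : ℤ)
  · simp [h2, hcond.mp h2]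
  · simp [h2, mt hcond.mpr h2]

lemma Hn_mono (σ : ℤ → Bool) {n y y' : ℤ} (hyy : y ≤ y') : Hn σ n y' ≤ Hn σ n y :=
  Set.ncard_le_ncard (fun z hz => ⟨lt_of_le_of_lt hyy hz.1, hz.2⟩) hfinH

lemma Hn_hole (σ : ℤ → Bool) {n y u : ℤ} (hyu : y < u) (hun : u ≤ n) (hu : σ u = false) :
    Hn σ n u + 1 ≤ Hn σ n y := by
  have hins : insert u {z : ℤ | u < z ∧ z ≤ n ∧ σ z = false}
      ⊆ {z : ℤ | y < z ∧ z ≤ n ∧ σ z = false} := by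
    rintro z (rfl | ⟨h1, h2⟩)
    · exact ⟨hyu, hun, hu⟩
    · exact ⟨hyu.trans h1, h2⟩
  have hcard : (insert u {z : ℤ | u < z ∧ z ≤ n ∧ σ z = false}).ncard = Hn σ n u + 1 :=
    Set.ncard_insert_of_notMem (by simp) hfinH
  calc Hn σ n u + 1 = _ := hcard.symm
    _ ≤ Hn σ n y := Set.ncard_le_ncard hins hfinH

lemma qfin_compat {σ σ' : ℤ → Bool} {m : ℤ} (h : QFin σ) (hc : Compat σ σ' m) : QFin σ' := by
  intro y
  apply Set.Finite.subset (Set.Finite.insert m (h y))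
  rintro z ⟨h1, h2⟩
  rcases eq_or_ne z m with rfl | hzm
  · exact Set.mem_insert _ _
  · exact Set.mem_insert_of_mem _ ⟨h1, by rw [hc.2.2 z hzm]; exact h2⟩

lemma qS_compat_ge {σ σ' : ℤ → Bool} {m : ℤ} (hc : Compat σ σ' m) {y : ℤ} (hmy : m ≤ y) :
    qS σ' y = qS σ y := by
  simp only [qS]
  congr 1
  ext z
  simp only [Set.mem_setOf_eq, and_congr_right_iff]
  intro hz
  rw [hc.2.2 z (by omega)]

lemma qS_compat_lt {σ σ' : ℤ → Bool} {m : ℤ} (h : QFin σ) (hc : Compat σ σ' m) {y : ℤ}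
    (hym : y < m) : qS σ y = qS σ' y + 1 := by
  have hsub : {z : ℤ | y < z ∧ σ' z = true} ⊆ {z : ℤ | y < z ∧ σ z = true} := by
    rintro z ⟨h1, h2⟩
    have hzm : z ≠ m := by rintro rfl; rw [hc.2.1] at h2; cases h2
    exact ⟨h1, by rw [hc.2.2 z hzm]; exact h2⟩
  have hset : {z : ℤ | y < z ∧ σ z = true} = insert m {z : ℤ | y < z ∧ σ' z = true} := by
    ext z
    simp only [Set.mem_insert_iff, Set.mem_setOf_eq]
    constructor
    · rintro ⟨h1, h2⟩
      rcases eq_or_ne z m with rfl | hzm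
      · exact Or.inl rfl
      · exact Or.inr ⟨h1, by rw [← hc.2.2 z hzm]; exact h2⟩
    · rintro (rfl | ⟨h1, h2⟩)
      · exact ⟨hym, hc.1⟩
      · have hzm : z ≠ m := by rintro rfl; rw [hc.2.1] at h2; cases h2
        exact ⟨h1, by rw [hc.2.2 z hzm]; exact h2⟩
  simp only [qS]
  rw [hset, Set.ncard_insert_of_notMem (by simp [hc.2.1]) (Set.Finite.subset (h y) hsub)]

lemma Hn_compat_eq {σ σ' : ℤ → Bool} {m : ℤ} (hc : Compat σ σ' m) {n y : ℤ}
    (hcase : m ≤ y ∨ n < m) : Hn σ' n y = Hn σ n y := by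
  simp only [Hn]
  congr 1
  ext z
  simp only [Set.mem_setOf_eq]
  constructor <;> rintro ⟨h1, h2, h3⟩ <;> refine ⟨h1, h2, ?_⟩
  · rw [hc.2.2 z (by omega)]; exact h3
  · rw [← hc.2.2 z (by omega)]; exact h3

lemma Hn_compat_lt {σ σ' : ℤ → Bool} {m : ℤ} (hc : Compat σ σ' m) {n y : ℤ}
    (hym : y < m) (hmn : m ≤ n) : Hn σ' n y = Hn σ n y + 1 := by
  have hset : {z : ℤ | y < z ∧ z ≤ n ∧ σ' z = false}
      = insert m {z : ℤ | y < z ∧ z ≤ n ∧ σ z = false} := by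
    ext z
    simp only [Set.mem_insert_iff, Set.mem_setOf_eq]
    constructor
    · rintro ⟨h1, h2, h3⟩
      rcases eq_or_ne z m with rfl | hzm
      · exact Or.inl rfl
      · exact Or.inr ⟨h1, h2, by rw [hc.2.2 z hzm]; exact h3⟩
    · rintro (rfl | ⟨h1, h2, h3⟩)
      · exact ⟨hym, hmn, hc.2.1⟩
      · have hzm : z ≠ m := by rintro rfl; rw [hc.1] at h3; cases h3
        exact ⟨h1, h2, by rw [← hc.2.2 z hzm]; exact h3⟩
  simp only [Hn]
  rw [hset, Set.ncard_insert_of_notMem (by simp [hc.1]) hfinH]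

end Aux
lemma bn_compat {σ σ' : ℤ → Bool} {n m t : ℤ} (h : QFin σ)
    (hc : Compat σ σ' m) (ht : IsKthHole σ n (qS σ n) t) :
    Compat (Bn n σ) (Bn n σ') (min m t) := by
  have hm1 := hc.1
  have hm2 := hc.2.1
  have hm3 := hc.2.2
  have h' : QFin σ' := qfin_compat h hc
  by_cases hj0 : qS σ n = 0
  · -- no particles beyond n
    rw [IsKthHole, if_pos hj0] at ht
    have hmn : m ≤ n := by
      by_contra hmn
      push_neg at hmn
      have := qS_particle h hmn hm1
      omega
    have hw : min m t = m := by omega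
    have hj' : qS σ' n = 0 := by rw [qS_compat_ge hc hmn]; exact hj0
    refine ⟨?_, ?_, ?_⟩
    · rw [hw]; exact (Bn_iff h hmn).mpr (Or.inl hm1)
    · rw [hw, Bool.eq_false_iff, Ne, Bn_iff h' hmn, hj']
      simp [hm2]
    · intro y hy
      rw [hw] at hy
      rcases lt_or_ge n y with hny | hny
      · rw [Bn_gt hny, Bn_gt hny]
      · apply bool_eq_of_iff
        rw [Bn_iff h hny, Bn_iff h' hny, hj0, hj']
        simp [hm3 y hy]
  · -- there are particles beyond n
    rw [IsKthHole, if_neg hj0] at ht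
    obtain ⟨htn, htσ, htH0⟩ := ht
    have htH : Hn σ n t = qS σ n - 1 := htH0
    have F1 : ∀ y, t ≤ y → Hn σ n y < qS σ n := by
      intro y hy
      have := Hn_mono (n := n) σ hy
      omega
    have F2 : ∀ y, y < t → qS σ n ≤ Hn σ n y := by
      intro y hy
      have := Hn_hole σ hy htn htσ
      omega
    have htm : t ≠ m := by
      intro he
      rw [he, hm1] at htσ
      cases htσ
    rcases le_or_gt m n with hmn | hmn
    · -- m ≤ n
      have hj' : qS σ' n = qS σ n := qS_compat_ge hc hmn
      rcases lt_or_gt_of_ne htm with htm' | htm'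
      · -- t < m : second-class particle at t
        have hw : min m t = t := min_eq_right htm'.le
        have hσ't : σ' t = false := by rw [← hm3 t htm]; exact htσ
        refine ⟨?_, ?_, ?_⟩
        · rw [hw]; exact (Bn_iff h htn).mpr (Or.inr (F1 t le_rfl))
        · rw [hw, Bool.eq_false_iff, Ne, Bn_iff h' htn, hj',
            Hn_compat_lt hc htm' hmn, hσ't]
          simp only [Bool.false_eq_true, false_or]
          omega
        · intro y hy
          rw [hw] at hy
          rcases lt_or_ge n y with hny | hny
          · rw [Bn_gt hny, Bn_gt hny]
          apply bool_eq_of_iff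
          rw [Bn_iff h hny, Bn_iff h' hny, hj']
          rcases lt_trichotomy y t with h1 | h1 | h1
          · -- y < t : both unchanged
            have hH := F2 y h1
            have hH' : Hn σ' n y = Hn σ n y + 1 := Hn_compat_lt hc (by omega) hmn
            have hn1 : ¬ (Hn σ n y < qS σ n) := by omega
            have hn2 : ¬ (Hn σ' n y < qS σ n) := by omega
            simp [hn1, hn2, hm3 y (by omega)]
          · exact absurd h1 hy
          · -- t < y : both sides occupied
            have hL : Hn σ n y < qS σ n := F1 y h1.le
            by_cases hσ'y : σ' y = true
            · have hσy : σ y = true ∨ y = m := by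
                rcases eq_or_ne y m with rfl | hym
                · exact Or.inr rfl
                · exact Or.inl (by rw [hm3 y hym]; exact hσ'y)
              rcases hσy with hσy | rfl
              · simp [hσy, hσ'y]
              · simp [hm1, hσ'y]
            · have hσ'y' : σ' y = false := by simpa using hσ'y
              have hb : Hn σ' n y < qS σ n := by
                rcases eq_or_ne y m with rfl | hym
                · rw [Hn_compat_eq hc (Or.inl le_rfl)]
                  exact hL
                · have hσy : σ y = false := by rw [hm3 y hym]; exact hσ'y'
                  have h5 := Hn_hole σ h1 hny hσy
                  have h6 : Hn σ' n y ≤ Hn σ n y + 1 := by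
                    rcases lt_or_ge y m with h7 | h7
                    · rw [Hn_compat_lt hc h7 hmn]
                    · rw [Hn_compat_eq hc (Or.inl h7)]; omega
                  omega
              simp [hL, hb]
      · -- m < t : second-class particle at m
        have hw : min m t = m := min_eq_left htm'.le
        refine ⟨?_, ?_, ?_⟩
        · rw [hw]; exact (Bn_iff h hmn).mpr (Or.inl hm1)
        · rw [hw, Bool.eq_false_iff, Ne, Bn_iff h' hmn, hj',
            Hn_compat_eq hc (Or.inl le_rfl), hm2]
          simp only [Bool.false_eq_true, false_or]
          have := F2 m htm'
          omega
        · intro y hy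
          rw [hw] at hy
          rcases lt_or_ge n y with hny | hny
          · rw [Bn_gt hny, Bn_gt hny]
          apply bool_eq_of_iff
          rw [Bn_iff h hny, Bn_iff h' hny, hj']
          rcases lt_or_ge y t with h1 | h1
          · -- y < t, y ≠ m : both unchanged
            have hH := F2 y h1
            have hH' : qS σ n ≤ Hn σ' n y := by
              rcases lt_or_ge y m with h7 | h7
              · rw [Hn_compat_lt hc h7 hmn]; omega
              · rw [Hn_compat_eq hc (Or.inl h7)]; omega
            have hn1 : ¬ (Hn σ n y < qS σ n) := by omega
            have hn2 : ¬ (Hn σ' n y < qS σ n) := by omega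
            simp [hn1, hn2, hm3 y hy]
          · -- t ≤ y : both occupied
            have hL := F1 y h1
            have hL' : Hn σ' n y < qS σ n := by
              rw [Hn_compat_eq hc (Or.inl (by omega))]
              exact hL
            simp [hL, hL']
    · -- n < m : the extra particle of σ is beyond n
      have hj' : qS σ n = qS σ' n + 1 := qS_compat_lt h hc hmn
      have hw : min m t = t := min_eq_right (by omega)
      have hHeq : ∀ y, Hn σ' n y = Hn σ n y := fun y => Hn_compat_eq hc (Or.inr hmn)
      have hσ't : σ' t = false := by rw [← hm3 t htm]; exact htσ
      refine ⟨?_, ?_, ?_⟩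
      · rw [hw]; exact (Bn_iff h htn).mpr (Or.inr (F1 t le_rfl))
      · rw [hw, Bool.eq_false_iff, Ne, Bn_iff h' htn, hHeq, hσ't]
        simp only [Bool.false_eq_true, false_or]
        omega
      · intro y hy
        rw [hw] at hy
        rcases lt_or_ge n y with hny | hny
        · rw [Bn_gt hny, Bn_gt hny]
        have hym : y ≠ m := by omega
        apply bool_eq_of_iff
        rw [Bn_iff h hny, Bn_iff h' hny, hHeq, ← hm3 y hym]
        rcases lt_trichotomy y t with h1 | h1 | h1
        · have hH := F2 y h1
          have hn1 : ¬ (Hn σ n y < qS σ n) := by omega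
          have hn2 : ¬ (Hn σ n y < qS σ' n) := by omega
          simp [hn1, hn2]
        · exact absurd h1 hy
        · have hL := F1 y h1.le
          by_cases hσy : σ y = true
          · simp [hσy]
          · have hσy' : σ y = false := by simpa using hσy
            have h5 := Hn_hole σ h1 hny hσy'
            have hb : Hn σ n y < qS σ' n := by omega
            simp [hL, hb]

lemma rk_compat {ρ ρ' : ℤ → Bool} (h : QFin ρ) {x p : ℤ} {k : ℕ} (hk : 1 ≤ k)
    (hc : Compat ρ ρ' x) (hp1 : ρ p = true) (hp2 : qS ρ p = k - 1) :
    Compat (Rk k ρ) (Rk (k - 1) ρ') (max x p) := by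
  have hx1 := hc.1
  have hx2 := hc.2.1
  have hx3 := hc.2.2
  have hqlt : ∀ y, y < p → k ≤ qS ρ y := by
    intro y hy
    have := qS_particle h hy hp1
    omega
  have hqge : ∀ y, p ≤ y → qS ρ y ≤ k - 1 := by
    intro y hy
    have := qS_mono h hy
    omega
  refine ⟨?_, ?_, ?_⟩
  · -- Rk k ρ (max x p) = true
    rcases le_total x p with hxp | hxp
    · rw [max_eq_right hxp, Rk, if_pos (by omega : qS ρ p < k)]
      exact hp1
    · rw [max_eq_left hxp, Rk, if_pos]
      · exact hx1
      · have := qS_mono h hxp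
        omega
  · -- Rk (k-1) ρ' (max x p) = false
    rcases le_total x p with hxp | hxp
    · rw [max_eq_right hxp, Rk, if_neg]
      rw [qS_compat_ge hc hxp, hp2]
      omega
    · rw [max_eq_left hxp, Rk]
      simp [hx2]
  · intro y hy
    rcases lt_or_gt_of_ne hy with hym | hym
    · -- y < max x p
      by_cases hyx : y = x
      · -- y = x < p
        subst hyx
        have hxp : y < p := by
          rcases max_cases y p with ⟨he, _⟩ | ⟨he, h2⟩
          · omega
          · omega
        rw [Rk, if_neg (by have := hqlt y hxp; omega), Rk]
        simp [hx2]
      · have hρeq : ρ y = ρ' y := hx3 y hyx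
        rcases lt_or_ge y x with h1 | h1
        · -- y < x
          have hq := qS_compat_lt h hc h1
          by_cases h2 : qS ρ y < k
          · rw [Rk, Rk, if_pos h2, if_pos (by omega), hρeq]
          · rw [Rk, Rk, if_neg h2, if_neg (by omega)]
        · -- x < y < max x p, so y < p
          have hxy : x < y := lt_of_le_of_ne h1 (Ne.symm hyx)
          have hyp : y < p := by
            rcases max_cases x p with ⟨he, _⟩ | ⟨he, _⟩ <;> omega
          have hq1 := hqlt y hyp
          have hq2 : qS ρ' y = qS ρ y := qS_compat_ge hc hxy.le
          rw [Rk, Rk, if_neg (by omega), if_neg (by omega)]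
    · -- y > max x p
      have hyx : x < y := lt_of_le_of_lt (le_max_left x p) hym
      have hyp : p < y := lt_of_le_of_lt (le_max_right x p) hym
      have hq2 : qS ρ' y = qS ρ y := qS_compat_ge hc hyx.le
      cases hρy : ρ y
      · have hρ'y : ρ' y = false := by rw [← hx3 y (by omega)]; exact hρy
        rw [Rk, Rk, hρy, hρ'y]
        simp
      · have h5 := qS_particle h hyp hρy
        have hρ'y : ρ' y = true := by rw [← hx3 y (by omega)]; exact hρy
        rw [Rk, Rk, if_pos (by omega), if_pos (by omega), hρy, hρ'y]
/-- Lemma 7.1, equation (19): for `1 ≤ k ≤ n` and compatible `ρ, ρ'` with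
second-class particle at `Σ = x`, where `ρ` has at least `k` particles, the `k`-th
rightmost being at `p = π_ρ(k)`, the configurations `B_n R_k ρ` and `B_n R_{k-1} ρ'`
are compatible with second-class particle at
`min(max(x, π_ρ(k)), θ_{R_k ρ}(n, S(R_k ρ, n)))`. -/
theorem compat_Bn_Rk (n : ℤ) (k : ℕ) (hk : 1 ≤ k) (hkn : (k : ℤ) ≤ n)
    (ρ ρ' : ℤ → Bool) (hρ : BddSupport ρ) (hρ' : BddSupport ρ')
    (x : ℤ) (hc : Compat ρ ρ' x)
    (p : ℤ) (hp : IsKthParticle ρ k p)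
    (t : ℤ) (ht : IsKthHole (Rk k ρ) n (qS (Rk k ρ) n) t) :
    Compat (Bn n (Rk k ρ)) (Bn n (Rk (k - 1) ρ')) (min (max x p) t) := by
  have hfρ : QFin ρ := qfin_of_bdd hρ
  have hcr : Compat (Rk k ρ) (Rk (k - 1) ρ') (max x p) :=
    rk_compat hfρ hk hc hp.1 hp.2
  have hfσ : QFin (Rk k ρ) := by
    intro y
    apply Set.Finite.subset (hfρ y)
    rintro z ⟨h1, h2⟩
    refine ⟨h1, ?_⟩
    rw [Rk] at h2
    by_cases h3 : qS ρ z < k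
    · rwa [if_pos h3] at h2
    · rw [if_neg h3] at h2; cases h2
  exact bn_compat hfσ hcr ht
end

section
/- Fix 0 < y < 1 and s > 0. For every u with 0 ≤ u ≤ 1, one has min( ∫_u^∞ h((x−y)/s) dx, y, 1−u ) = ∫_u^1 f(s,x,y) dx, where f is the limiting density profile defined in the context. (Identity (10), the key computation in the proof of Theorem 4.3) -/
open MeasureTheory

/-- The Rost hydrodynamic density profile `h(x) = min(1, max((1-x)/2, 0))`. -/
noncomputable def hRost (x : ℝ) : ℝ := min 1 (max ((1 - x) / 2) 0)

/-- `L_y^-(s) = y + s - 2√(sy)`. -/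
noncomputable def Lminus (y s : ℝ) : ℝ := y + s - 2 * Real.sqrt (s * y)

/-- `L_y^+(s) = y - s + 2√(s(1-y))`. -/
noncomputable def Lplus (y s : ℝ) : ℝ := y - s + 2 * Real.sqrt (s * (1 - y))

/-- `γ_y = 1 + 2√(y(1-y))`. -/
noncomputable def gamma' (y : ℝ) : ℝ := 1 + 2 * Real.sqrt (y * (1 - y))

open Classical in
/-- The limiting density profile `f(s, x, y)` of Theorem 4.3 (defined for a.e. `x`;
the cases below are almost everywhere exhaustive and disjoint, and we set `f := 0`
outside them). -/
noncomputable def fProfile (s x y : ℝ) : ℝ :=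
  if max (y - s) (Lminus y s) < x ∧ x < min (y + s) (Lplus y s) then (s + y - x) / (2 * s)
  else if 0 < x ∧ x < y - s then 1
  else if y + s < x ∧ x < 1 then 0
  else if 1 - y < s ∧ max (1 - y) (Lplus y s) < x ∧ x < 1 then 1
  else if y < s ∧ 0 < x ∧ x < min (1 - y) (Lminus y s) then 0
  else 0

/-!
The tail integral `F(u) = ∫_u^∞ h((x - y)/s) dx` is explicit: it equals `y - u` for `u ≤ y - s`,
`(s + y - u)² / (4s)` on `[y - s, y + s]` and `0` beyond. On `[y - s, y + s]` the parabola lies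
below `y` exactly when `u > L_y^-(s)` and below `1 - u` exactly when `u < L_y^+(s)`, so away from
the five break points `y ± s`, `L_y^±(s)`, `1 - y` the continuous function
`G(u) = min(F(u), y, 1 - u)` is locally one of `y - u`, `0`, the parabola, `y` or `1 - u`, with
derivative `-f(s, u, y)`. Since `G(1) = 0`, the fundamental theorem of calculus with countably many
exceptional points gives `G(u) = ∫_u^1 f(s, x, y) dx`.
-/

open Set

namespace Rost

lemma hasDerivAt_of_eqOn_Ioo {f g : ℝ → ℝ} {a b x d : ℝ} (hx : x ∈ Ioo a b)
    (hfg : EqOn f g (Ioo a b)) (hg : HasDerivAt g d x) : HasDerivAt f d x :=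
  hg.congr_of_eventuallyEq (hfg.eventuallyEq_of_mem (Ioo_mem_nhds hx.1 hx.2))

lemma hasDerivAt_sub_sq_div (c s x : ℝ) :
    HasDerivAt (fun v => (c - v) ^ 2 / (4 * s)) (-((c - x) / (2 * s))) x :=
  ((((hasDerivAt_id' x).const_sub c).fun_pow 2).div_const (4 * s)).congr_deriv (by ring)

lemma lt_of_sqrt_mul_lt {s a : ℝ} (hs : 0 < s) (h : √(s * a) < s) : a < s := by
  rw [Real.sqrt_lt' hs, sq] at h
  exact lt_of_mul_lt_mul_left h hs.le

variable {y s x v : ℝ}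

lemma Lminus_le_add : Lminus y s ≤ y + s := by
  unfold Lminus; linarith [Real.sqrt_nonneg (s * y)]

lemma sub_le_Lplus : y - s ≤ Lplus y s := by
  unfold Lplus; linarith [Real.sqrt_nonneg (s * (1 - y))]

lemma sq_div_lt_iff_Lminus_lt (hs : 0 < s) (hy : 0 ≤ y) (hv : v ≤ y + s) :
    (s + y - v) ^ 2 / (4 * s) < y ↔ Lminus y s < v := by
  have hsq : y * (4 * s) = (2 * √(s * y)) ^ 2 := by
    rw [mul_pow, Real.sq_sqrt (by positivity)]; ring
  rw [div_lt_iff₀ (by positivity), hsq, sq_lt_sq₀ (by linarith) (by positivity), Lminus]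
  constructor <;> intro <;> linarith

lemma sq_div_lt_iff_lt_Lplus (hs : 0 < s) (hy : y ≤ 1) (hv : y - s ≤ v) :
    (s + y - v) ^ 2 / (4 * s) < 1 - v ↔ v < Lplus y s := by
  have hsq : (s + y - v) ^ 2 - (1 - v) * (4 * s) = (v - y + s) ^ 2 - (2 * √(s * (1 - y))) ^ 2 := by
    rw [mul_pow, Real.sq_sqrt (by nlinarith)]; ring
  rw [div_lt_iff₀ (by positivity), ← sub_neg, hsq, sub_neg,
    sq_lt_sq₀ (by linarith) (by positivity), Lplus]
  constructor <;> intro <;> linarith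

lemma hRost_div_of_le_sub (hs : 0 < s) (hx : x ≤ y - s) : hRost ((x - y) / s) = 1 := by
  have : (x - y) / s ≤ -1 := by rw [div_le_iff₀ hs]; linarith
  rw [hRost, max_eq_left (by linarith), min_eq_left (by linarith)]

lemma hRost_div_of_mem_Icc (hs : 0 < s) (h₁ : y - s ≤ x) (h₂ : x ≤ y + s) :
    hRost ((x - y) / s) = (s + y - x) / (2 * s) := by
  have : -1 ≤ (x - y) / s := by rw [le_div_iff₀ hs]; linarith
  have : (x - y) / s ≤ 1 := by rw [div_le_iff₀ hs]; linarith
  rw [hRost, max_eq_left (by linarith), min_eq_right (by linarith)]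
  field_simp
  ring

lemma hRost_div_of_add_le (hs : 0 < s) (hx : y + s ≤ x) : hRost ((x - y) / s) = 0 := by
  have : 1 ≤ (x - y) / s := by rw [le_div_iff₀ hs]; linarith
  rw [hRost, max_eq_right (by linarith), min_eq_right zero_le_one]

noncomputable def rostTail (y s v : ℝ) : ℝ :=
  max 0 (min (2 * s) (y + s - v)) ^ 2 / (4 * s) + max 0 (y - s - v)

lemma continuous_rostTail (y s : ℝ) : Continuous (rostTail y s) := by
  unfold rostTail; fun_prop

lemma rostTail_nonneg (hs : 0 < s) : 0 ≤ rostTail y s v := by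
  unfold rostTail; positivity

lemma rostTail_of_le_sub (hs : 0 < s) (hv : v ≤ y - s) : rostTail y s v = y - v := by
  rw [rostTail, min_eq_left (by linarith), max_eq_right (by linarith), max_eq_right (by linarith)]
  field_simp
  ring

lemma rostTail_of_mem_Icc (h₁ : y - s ≤ v) (h₂ : v ≤ y + s) :
    rostTail y s v = (s + y - v) ^ 2 / (4 * s) := by
  rw [rostTail, min_eq_right (by linarith), max_eq_right (by linarith), max_eq_left (by linarith),
    add_zero, add_comm s]

lemma rostTail_of_add_le (hs : 0 < s) (hv : y + s ≤ v) : rostTail y s v = 0 := by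
  rw [rostTail, max_eq_left (min_le_of_right_le (by linarith)), max_eq_left (by linarith)]
  simp

lemma hasDerivAt_rostTail (hs : 0 < s) (h₁ : x ≠ y - s) (h₂ : x ≠ y + s) :
    HasDerivAt (rostTail y s) (-hRost ((x - y) / s)) x := by
  rcases h₁.lt_or_gt with h₁ | h₁
  · rw [hRost_div_of_le_sub hs h₁.le]
    exact hasDerivAt_of_eqOn_Ioo (a := x - 1) ⟨by linarith, h₁⟩
      (fun v hv => rostTail_of_le_sub hs hv.2.le) ((hasDerivAt_id x).const_sub y)
  rcases h₂.lt_or_gt with h₂ | h₂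
  · rw [hRost_div_of_mem_Icc hs h₁.le h₂.le]
    exact hasDerivAt_of_eqOn_Ioo ⟨h₁, h₂⟩
      (fun v hv => rostTail_of_mem_Icc hv.1.le hv.2.le) (hasDerivAt_sub_sq_div _ s x)
  · rw [hRost_div_of_add_le hs h₂.le, neg_zero]
    exact hasDerivAt_of_eqOn_Ioo (b := x + 1) ⟨h₂, by linarith⟩
      (fun v hv => rostTail_of_add_le hs hv.1.le) (hasDerivAt_const x 0)

theorem integral_Ioi_hRost_div (hs : 0 < s) (u : ℝ) :
    ∫ x in Ioi u, hRost ((x - y) / s) = rostTail y s u := by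
  set M := max u (y + s)
  have huM : u ≤ M := le_max_left _ _
  have hφ : Continuous fun x => hRost ((x - y) / s) := by unfold hRost; fun_prop
  have hzero : EqOn (fun x => hRost ((x - y) / s)) (fun _ => 0) (Ioi M) :=
    fun x hx => hRost_div_of_add_le hs ((le_max_right _ _).trans hx.le)
  have hFTC := integral_eq_of_hasDerivAt_off_countable_of_le (rostTail y s)
    (fun x => -hRost ((x - y) / s)) huM (s := {y - s, y + s}) (toFinite _).countable
    (continuous_rostTail y s).continuousOn
    (fun x hx => by
      simp only [mem_sdiff, mem_insert_iff, mem_singleton_iff, not_or] at hx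
      exact hasDerivAt_rostTail hs hx.2.1 hx.2.2)
    (hφ.neg.intervalIntegrable _ _)
  rw [intervalIntegral.integral_neg, intervalIntegral.integral_of_le huM,
    rostTail_of_add_le hs (le_max_right _ _)] at hFTC
  rw [← Ioc_union_Ioi_eq_Ioi huM, setIntegral_union (Ioc_disjoint_Ioi le_rfl) measurableSet_Ioi
    hφ.integrableOn_Ioc (integrableOn_zero.congr_fun hzero.symm measurableSet_Ioi),
    setIntegral_congr_fun measurableSet_Ioi hzero, integral_zero]
  linarith

noncomputable def cappedTail (y s v : ℝ) : ℝ := min (rostTail y s v) (min y (1 - v))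

lemma continuous_cappedTail (y s : ℝ) : Continuous (cappedTail y s) := by
  unfold cappedTail; have := continuous_rostTail y s; fun_prop

lemma cappedTail_one (hy : 0 ≤ y) (hs : 0 < s) : cappedTail y s 1 = 0 := by
  rw [cappedTail, sub_self, min_eq_right hy, min_eq_right (rostTail_nonneg hs)]

lemma cappedTail_eqOn_Ioo_zero_sub (hy : y ≤ 1) (hs : 0 < s) :
    EqOn (cappedTail y s) (fun v => y - v) (Ioo 0 (y - s)) := by
  intro v hv
  rw [cappedTail, rostTail_of_le_sub hs hv.2.le]
  exact min_eq_left (le_min (by linarith [hv.1]) (by linarith))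

lemma cappedTail_eqOn_Ioo_add_one (hy : 0 ≤ y) (hs : 0 < s) :
    EqOn (cappedTail y s) (fun _ => 0) (Ioo (y + s) 1) := by
  intro v hv
  rw [cappedTail, rostTail_of_add_le hs hv.1.le]
  exact min_eq_left (le_min hy (by linarith [hv.2]))

lemma cappedTail_eqOn_rarefaction (hy₀ : 0 ≤ y) (hy₁ : y ≤ 1) (hs : 0 < s) :
    EqOn (cappedTail y s) (fun v => (s + y - v) ^ 2 / (4 * s))
      (Ioo (max (y - s) (Lminus y s)) (min (y + s) (Lplus y s))) := by
  intro v hv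
  obtain ⟨h₁, h₃⟩ := max_lt_iff.1 hv.1
  obtain ⟨h₂, h₄⟩ := lt_min_iff.1 hv.2
  rw [cappedTail, rostTail_of_mem_Icc h₁.le h₂.le]
  exact min_eq_left (le_min ((sq_div_lt_iff_Lminus_lt hs hy₀ h₂.le).2 h₃).le
    ((sq_div_lt_iff_lt_Lplus hs hy₁ h₁.le).2 h₄).le)

lemma cappedTail_eqOn_Ioo_sub_min (hy : 0 ≤ y) (hs : 0 < s) :
    EqOn (cappedTail y s) (fun _ => y) (Ioo (y - s) (min (Lminus y s) (1 - y))) := by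
  intro v hv
  obtain ⟨h₃, h₅⟩ := lt_min_iff.1 hv.2
  have h₂ : v ≤ y + s := (h₃.trans_le Lminus_le_add).le
  rw [cappedTail, rostTail_of_mem_Icc hv.1.le h₂, min_eq_left (by linarith : y ≤ 1 - v)]
  exact min_eq_right (not_lt.1 fun h => (sq_div_lt_iff_Lminus_lt hs hy h₂).1 h |>.not_gt h₃)

lemma cappedTail_eqOn_Ioo_max_add (hy : y ≤ 1) (hs : 0 < s) :
    EqOn (cappedTail y s) (fun v => 1 - v) (Ioo (max (Lplus y s) (1 - y)) (y + s)) := by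
  intro v hv
  obtain ⟨h₄, h₅⟩ := max_lt_iff.1 hv.1
  have h₁ : y - s ≤ v := (sub_le_Lplus.trans_lt h₄).le
  rw [cappedTail, rostTail_of_mem_Icc h₁ hv.2.le, min_eq_right (by linarith : 1 - v ≤ y)]
  exact min_eq_right (not_lt.1 fun h => (sq_div_lt_iff_lt_Lplus hs hy h₁).1 h |>.not_gt h₄)

lemma measurable_fProfile (s y : ℝ) : Measurable fun x => fProfile s x y := by
  unfold fProfile
  refine Measurable.ite ?_ (by fun_prop) <| Measurable.ite ?_ measurable_const <|
    Measurable.ite ?_ measurable_const <| Measurable.ite ?_ measurable_const <|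
    Measurable.ite ?_ measurable_const measurable_const
  all_goals measurability

lemma norm_fProfile_le_one (hs : 0 < s) (x y : ℝ) : ‖fProfile s x y‖ ≤ 1 := by
  rw [Real.norm_eq_abs, fProfile]
  split_ifs with h <;> try norm_num
  have h₁ : y - s < x := (le_max_left _ _).trans_lt h.1
  have h₂ : x < y + s := h.2.trans_le (min_le_left _ _)
  rw [abs_of_nonneg (div_nonneg (by linarith) (by linarith)), div_le_one (by linarith)]
  linarith

lemma fProfile_of_lt_sub (hx₀ : 0 < x) (hx : x < y - s) : fProfile s x y = 1 := by
  rw [fProfile, if_neg fun h => by linarith [le_max_left (y - s) (Lminus y s), h.1],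
    if_pos ⟨hx₀, hx⟩]

lemma fProfile_of_add_lt (hs : 0 < s) (hx : y + s < x) (hx₁ : x < 1) : fProfile s x y = 0 := by
  rw [fProfile, if_neg fun h => by linarith [min_le_left (y + s) (Lplus y s), h.2],
    if_neg fun h => by linarith [h.2], if_pos ⟨hx, hx₁⟩]

lemma fProfile_of_mem_rarefaction
    (hx : x ∈ Ioo (max (y - s) (Lminus y s)) (min (y + s) (Lplus y s))) :
    fProfile s x y = (s + y - x) / (2 * s) :=
  if_pos hx

lemma fProfile_of_mem_Ioo_sub_min (hs : 0 < s) (hx₀ : 0 < x)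
    (hx : x ∈ Ioo (y - s) (min (Lminus y s) (1 - y))) : fProfile s x y = 0 := by
  obtain ⟨h₃, h₅⟩ := lt_min_iff.1 hx.2
  have hys : y < s := lt_of_sqrt_mul_lt hs (by unfold Lminus at h₃; linarith [hx.1])
  rw [fProfile, if_neg fun h => by linarith [le_max_right (y - s) (Lminus y s), h.1],
    if_neg fun h => by linarith [hx.1, h.2],
    if_neg fun h => by linarith [h.1, h₃.trans_le Lminus_le_add],
    if_neg fun h => by linarith [le_max_left (1 - y) (Lplus y s), h.2.1],
    if_pos ⟨hys, hx₀, lt_min h₅ h₃⟩]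

lemma fProfile_of_mem_Ioo_max_add (hs : 0 < s) (hx₁ : x < 1)
    (hx : x ∈ Ioo (max (Lplus y s) (1 - y)) (y + s)) : fProfile s x y = 1 := by
  obtain ⟨h₄, h₅⟩ := max_lt_iff.1 hx.1
  have hys : 1 - y < s := lt_of_sqrt_mul_lt hs (by unfold Lplus at h₄; linarith [hx.2])
  rw [fProfile, if_neg fun h => by linarith [min_le_right (y + s) (Lplus y s), h.2],
    if_neg fun h => by linarith [h.2, sub_le_Lplus.trans_lt h₄],
    if_neg fun h => by linarith [hx.2, h.1],
    if_pos ⟨hys, max_lt h₅ h₄, hx₁⟩]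

lemma hasDerivAt_cappedTail_of_mem_Ioo (hy₀ : 0 ≤ y) (hy₁ : y ≤ 1) (hs : 0 < s) (hx₀ : 0 < x)
    (hx₁ : x < 1) (hx : x ∈ Ioo (y - s) (y + s)) (h₃ : x ≠ Lminus y s) (h₄ : x ≠ Lplus y s)
    (h₅ : x ≠ 1 - y) : HasDerivAt (cappedTail y s) (-fProfile s x y) x := by
  have hQy := sq_div_lt_iff_Lminus_lt hs hy₀ hx.2.le
  have hQ1 := sq_div_lt_iff_lt_Lplus hs hy₁ hx.1.le
  by_cases hA : Lminus y s < x ∧ x < Lplus y s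
  · have hmem : x ∈ Ioo (max (y - s) (Lminus y s)) (min (y + s) (Lplus y s)) :=
      ⟨max_lt hx.1 hA.1, lt_min hx.2 hA.2⟩
    rw [fProfile_of_mem_rarefaction hmem]
    exact hasDerivAt_of_eqOn_Ioo hmem (cappedTail_eqOn_rarefaction hy₀ hy₁ hs)
      (hasDerivAt_sub_sq_div _ s x)
  rcases h₅.lt_or_gt with h₅ | h₅
  · have h₃ : x < Lminus y s := by
      refine h₃.lt_or_gt.resolve_right fun h => ?_
      have : ¬x < Lplus y s := fun h' => hA ⟨h, h'⟩
      linarith [hQy.2 h, not_lt.1 (mt hQ1.1 this)]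
    have hmem : x ∈ Ioo (y - s) (min (Lminus y s) (1 - y)) := ⟨hx.1, lt_min h₃ h₅⟩
    rw [fProfile_of_mem_Ioo_sub_min hs hx₀ hmem, neg_zero]
    exact hasDerivAt_of_eqOn_Ioo hmem (cappedTail_eqOn_Ioo_sub_min hy₀ hs) (hasDerivAt_const x y)
  · have h₄ : Lplus y s < x := by
      refine h₄.lt_or_gt.resolve_left fun h => ?_
      have : ¬Lminus y s < x := fun h' => hA ⟨h', h⟩
      linarith [hQ1.2 h, not_lt.1 (mt hQy.1 this)]
    have hmem : x ∈ Ioo (max (Lplus y s) (1 - y)) (y + s) := ⟨max_lt h₄ h₅, hx.2⟩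
    rw [fProfile_of_mem_Ioo_max_add hs hx₁ hmem]
    exact hasDerivAt_of_eqOn_Ioo hmem (cappedTail_eqOn_Ioo_max_add hy₁ hs)
      ((hasDerivAt_id x).const_sub 1)

lemma hasDerivAt_cappedTail (hy₀ : 0 ≤ y) (hy₁ : y ≤ 1) (hs : 0 < s) (hx : x ∈ Ioo 0 1)
    (hxS : x ∉ ({y - s, y + s, Lminus y s, Lplus y s, 1 - y} : Set ℝ)) :
    HasDerivAt (cappedTail y s) (-fProfile s x y) x := by
  simp only [mem_insert_iff, mem_singleton_iff, not_or] at hxS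
  obtain ⟨h₁, h₂, h₃, h₄, h₅⟩ := hxS
  rcases lt_or_gt_of_ne h₁ with h₁ | h₁
  · rw [fProfile_of_lt_sub hx.1 h₁]
    exact hasDerivAt_of_eqOn_Ioo ⟨hx.1, h₁⟩ (cappedTail_eqOn_Ioo_zero_sub hy₁ hs)
      ((hasDerivAt_id x).const_sub y)
  rcases lt_or_gt_of_ne h₂ with h₂ | h₂
  · exact hasDerivAt_cappedTail_of_mem_Ioo hy₀ hy₁ hs hx.1 hx.2 ⟨h₁, h₂⟩ h₃ h₄ h₅
  · rw [fProfile_of_add_lt hs h₂ hx.2, neg_zero]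
    exact hasDerivAt_of_eqOn_Ioo ⟨h₂, hx.2⟩ (cappedTail_eqOn_Ioo_add_one hy₀ hs)
      (hasDerivAt_const x 0)

end Rost

open Rost

/-- Identity (10) in the proof of Theorem 4.3: for `0 < y < 1`, `s > 0` and
`0 ≤ u ≤ 1`, `min(∫_u^∞ h((x-y)/s) dx, y, 1-u) = ∫_u^1 f(s, x, y) dx`. -/
theorem F_eq_integral_f (y s u : ℝ) (hy0 : 0 < y) (hy1 : y < 1) (hs : 0 < s)
    (hu0 : 0 ≤ u) (hu1 : u ≤ 1) :
    min (∫ x in Set.Ioi u, hRost ((x - y) / s)) (min y (1 - u))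
      = ∫ x in u..1, fProfile s x y := by
  have hderiv : ∀ x ∈ Ioo u 1 \ {y - s, y + s, Lminus y s, Lplus y s, 1 - y},
      HasDerivAt (cappedTail y s) (-fProfile s x y) x := fun x hx =>
    hasDerivAt_cappedTail hy0.le hy1.le hs ⟨hu0.trans_lt hx.1.1, hx.1.2⟩ hx.2
  have hint : IntervalIntegrable (fun x => fProfile s x y) volume u 1 :=
    intervalIntegrable_const.mono_fun' (measurable_fProfile s y).aestronglyMeasurable
      (ae_of_all _ fun x => norm_fProfile_le_one hs x y)
  have hFTC := integral_eq_of_hasDerivAt_off_countable_of_le _ _ hu1 (toFinite _).countable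
    (continuous_cappedTail y s).continuousOn hderiv hint.neg
  rw [intervalIntegral.integral_neg, cappedTail_one hy0.le hs] at hFTC
  rw [integral_Ioi_hRost_div hs]
  change cappedTail y s u = _
  linarith
end

section
/- Fix y with 0 < y ≤ 1 and s > 0. Then sup{ u ∈ ℝ : ∫_u^∞ h((x−y)/s) dx ≥ y } equals 0 if s ≤ y, and equals L_y^-(s) = y + s − 2√(sy) if s ≥ y. (Explicit formula for the left edge Λ_y^-(s) in the proof of Theorem 4.3) -/
open MeasureTheory

/-! The tail integral `F(u) = ∫_u^∞ h((x-y)/s) dx` is explicit: `y - u` left of `y - s`,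
`(y + s - u)² / (4s)` on `[y - s, y + s]`, and `0` right of `y + s`. It is nonincreasing, so
`{u | y ≤ F u}` is a half-line `(-∞, c]` with `F c = y`. If `s ≤ y`, the level `y` is reached on
the linear piece, at `c = 0`; if `y ≤ s`, it is reached on the quadratic piece, where
`(y + s - c)² = 4sy` gives `c = y + s - 2√(sy)`. -/

open Set

lemma hRost_of_le_neg_one {t : ℝ} (ht : t ≤ -1) : hRost t = 1 := by
  rw [hRost, max_eq_left (by linarith), min_eq_left (by linarith)]

lemma hRost_of_mem_Icc {t : ℝ} (ht : t ∈ Icc (-1) 1) : hRost t = (1 - t) / 2 := by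
  rw [hRost, max_eq_left (by linarith [ht.2]), min_eq_right (by linarith [ht.1])]

lemma hRost_of_one_le {t : ℝ} (ht : 1 ≤ t) : hRost t = 0 := by
  rw [hRost, max_eq_right (by linarith), min_eq_right (by linarith)]

lemma continuous_hRost : Continuous hRost := by
  unfold hRost; fun_prop

noncomputable def rostTail (y s u : ℝ) : ℝ := ∫ x in Ioi u, hRost ((x - y) / s)

section RostTail

variable {y s u : ℝ}

lemma hRost_div_of_add_le (hs : 0 < s) {x : ℝ} (hx : y + s ≤ x) : hRost ((x - y) / s) = 0 :=
  hRost_of_one_le <| (one_le_div hs).2 (by linarith)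

lemma rostTail_of_add_le (hs : 0 < s) (hu : y + s ≤ u) : rostTail y s u = 0 :=
  setIntegral_eq_zero_of_forall_eq_zero fun _ hx => hRost_div_of_add_le hs (hu.trans (le_of_lt hx))

lemma rostTail_eq_intervalIntegral (hs : 0 < s) (hu : u ≤ y + s) :
    rostTail y s u = ∫ x in u..y + s, hRost ((x - y) / s) := by
  rw [intervalIntegral.integral_of_le hu, rostTail]
  refine setIntegral_eq_of_subset_of_forall_sdiff_eq_zero measurableSet_Ioi Ioc_subset_Ioi_self
    fun x ⟨hxu, hx⟩ => hRost_div_of_add_le hs ?_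
  exact le_of_lt (not_le.1 fun h => hx ⟨hxu, h⟩)

lemma integral_hRost_div_of_mem_Icc (hs : 0 < s) (hu : u ∈ Icc (y - s) (y + s)) :
    ∫ x in u..y + s, hRost ((x - y) / s) = (y + s - u) ^ 2 / (4 * s) := by
  have hlin : EqOn (fun x => hRost ((x - y) / s)) (fun x => (y + s - x) / (2 * s))
      (uIcc u (y + s)) := by
    intro x hx
    rw [uIcc_of_le hu.2] at hx
    dsimp only
    rw [hRost_of_mem_Icc ⟨(le_div_iff₀ hs).2 (by linarith [hu.1, hx.1]),
      (div_le_one hs).2 (by linarith [hx.2])⟩]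
    field_simp
    ring
  rw [intervalIntegral.integral_congr hlin, intervalIntegral.integral_div,
    intervalIntegral.integral_sub intervalIntegrable_const intervalIntegral.intervalIntegrable_id,
    intervalIntegral.integral_const, integral_id, smul_eq_mul]
  field_simp
  ring

lemma rostTail_of_mem_Icc (hs : 0 < s) (hu : u ∈ Icc (y - s) (y + s)) :
    rostTail y s u = (y + s - u) ^ 2 / (4 * s) := by
  rw [rostTail_eq_intervalIntegral hs hu.2, integral_hRost_div_of_mem_Icc hs hu]

lemma rostTail_of_le_sub (hs : 0 < s) (hu : u ≤ y - s) : rostTail y s u = y - u := by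
  have hone : EqOn (fun x => hRost ((x - y) / s)) (fun _ => 1) (uIcc u (y - s)) := by
    intro x hx
    rw [uIcc_of_le hu] at hx
    exact hRost_of_le_neg_one <| (div_le_iff₀ hs).2 (by linarith [hx.2])
  have hint : ∀ a b, IntervalIntegrable (fun x => hRost ((x - y) / s)) volume a b := fun _ _ =>
    (continuous_hRost.comp (by fun_prop)).intervalIntegrable _ _
  rw [rostTail_eq_intervalIntegral hs (by linarith),
    ← intervalIntegral.integral_add_adjacent_intervals (hint u (y - s)) (hint (y - s) (y + s)),
    intervalIntegral.integral_congr hone,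
    integral_hRost_div_of_mem_Icc hs ⟨le_rfl, by linarith⟩, intervalIntegral.integral_const]
  field_simp
  ring

lemma le_rostTail_iff_of_le (hs : 0 < s) (hsy : s ≤ y) : y ≤ rostTail y s u ↔ u ≤ 0 := by
  rcases le_or_gt u (y - s) with hlow | hlow
  · rw [rostTail_of_le_sub hs hlow, le_sub_self_iff]
  rcases le_or_gt u (y + s) with hhigh | hhigh
  · rw [rostTail_of_mem_Icc hs ⟨hlow.le, hhigh⟩, le_div_iff₀ (by positivity)]
    constructor <;> intro h <;> nlinarith
  · rw [rostTail_of_add_le hs hhigh.le]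
    constructor <;> intro h <;> linarith

lemma le_rostTail_iff_of_ge (hy : 0 < y) (hys : y ≤ s) :
    y ≤ rostTail y s u ↔ u ≤ Lminus y s := by
  have hs : 0 < s := hy.trans_le hys
  set r := Real.sqrt (s * y)
  have hr : r ^ 2 = s * y := Real.sq_sqrt (by positivity)
  have hr0 : 0 ≤ r := Real.sqrt_nonneg _
  have hrs : r ≤ s := by nlinarith
  rw [Lminus]
  rcases le_or_gt u (y - s) with hlow | hlow
  · rw [rostTail_of_le_sub hs hlow]
    constructor <;> intro <;> linarith
  rcases le_or_gt u (y + s) with hhigh | hhigh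
  · have hsq : y ≤ (y + s - u) ^ 2 / (4 * s) ↔ (2 * r) ^ 2 ≤ (y + s - u) ^ 2 := by
      rw [le_div_iff₀ (by positivity), mul_pow, hr]
      constructor <;> intro <;> linarith
    rw [rostTail_of_mem_Icc hs ⟨hlow.le, hhigh⟩, hsq, sq_le_sq₀ (by positivity) (by linarith)]
    constructor <;> intro <;> linarith
  · rw [rostTail_of_add_le hs hhigh.le]
    constructor <;> intro <;> linarith

end RostTail

theorem left_edge_formula_general (y s : ℝ) (hy0 : 0 < y) (hs : 0 < s) :
    (s ≤ y →
      sSup {u : ℝ | y ≤ ∫ x in Set.Ioi u, hRost ((x - y) / s)} = 0)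
    ∧ (y ≤ s →
      sSup {u : ℝ | y ≤ ∫ x in Set.Ioi u, hRost ((x - y) / s)} = Lminus y s) := by
  refine ⟨fun hsy => ?_, fun hys => ?_⟩
  · have hset : {u : ℝ | y ≤ rostTail y s u} = Iic 0 :=
      ext fun _ => le_rostTail_iff_of_le hs hsy
    exact hset ▸ csSup_Iic
  · have hset : {u : ℝ | y ≤ rostTail y s u} = Iic (Lminus y s) :=
      ext fun _ => le_rostTail_iff_of_ge hy0 hys
    exact hset ▸ csSup_Iic

/-- Explicit formula for the left edge `Λ_y^-(s)` in the proof of Theorem 4.3: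
`sup{u : ∫_u^∞ h((x-y)/s) dx ≥ y}` equals `0` if `s ≤ y` and `L_y^-(s)` if `s ≥ y`. -/
theorem left_edge_formula (y s : ℝ) (hy0 : 0 < y) (hy1 : y ≤ 1) (hs : 0 < s) :
    (s ≤ y →
      sSup {u : ℝ | y ≤ ∫ x in Set.Ioi u, hRost ((x - y) / s)} = 0)
    ∧ (y ≤ s →
      sSup {u : ℝ | y ≤ ∫ x in Set.Ioi u, hRost ((x - y) / s)} = Lminus y s) :=
  left_edge_formula_general y s hy0 hs
end

section
/- Fix 0 < y < 1, and for s > 0 define Λ_y^-(s) := 0 if s < y and Λ_y^-(s) := L_y^-(s) if s ≥ y, and Λ_y^+(s) := 1 if s < 1−y and Λ_y^+(s) := L_y^+(s) if s ≥ 1−y. Then Λ_y^-(s) ≤ Λ_y^+(s) if 0 < s ≤ γ_y, and Λ_y^-(s) > Λ_y^+(s) if s > γ_y. (Comparison of the two edges, used in the proof of Theorem 4.3) -/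
open MeasureTheory

set_option maxHeartbeats 1000000 in
open Classical in
/-- Comparison of the two edges `Λ_y^-(s)` and `Λ_y^+(s)` used in the proof of
Theorem 4.3: `Λ_y^-(s) ≤ Λ_y^+(s)` for `0 < s ≤ γ_y`, and `Λ_y^-(s) > Λ_y^+(s)` for
`s > γ_y`, where `Λ_y^-(s) := 0` for `s < y`, `:= L_y^-(s)` for `s ≥ y`, and
`Λ_y^+(s) := 1` for `s < 1-y`, `:= L_y^+(s)` for `s ≥ 1-y`. -/
theorem edges_comparison (y : ℝ) (hy0 : 0 < y) (hy1 : y < 1) (s : ℝ) (hs : 0 < s) :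
    (s ≤ gamma' y →
      (if s < y then 0 else Lminus y s) ≤ (if s < 1 - y then 1 else Lplus y s))
    ∧ (gamma' y < s →
      (if s < 1 - y then 1 else Lplus y s) < (if s < y then 0 else Lminus y s)) := by
  have hy1' : (0:ℝ) < 1 - y := by linarith
  set a := Real.sqrt y with hadef
  set b := Real.sqrt (1 - y) with hbdef
  set t := Real.sqrt s with htdef
  have ha2 : a ^ 2 = y := Real.sq_sqrt hy0.le
  have hb2 : b ^ 2 = 1 - y := Real.sq_sqrt hy1'.le
  have ht2 : t ^ 2 = s := Real.sq_sqrt hs.le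
  have ha0 : 0 < a := Real.sqrt_pos.mpr hy0
  have hb0 : 0 < b := Real.sqrt_pos.mpr hy1'
  have ht0 : 0 < t := Real.sqrt_pos.mpr hs
  have hsy : Real.sqrt (s * y) = t * a := Real.sqrt_mul hs.le y
  have hsb : Real.sqrt (s * (1 - y)) = t * b := Real.sqrt_mul hs.le _
  have hab : Real.sqrt (y * (1 - y)) = a * b := Real.sqrt_mul hy0.le _
  have hLm : Lminus y s = (t - a) ^ 2 := by
    rw [Lminus, hsy]; nlinarith [ha2, ht2]
  have hLp : Lplus y s = 1 - (t - b) ^ 2 := by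
    rw [Lplus, hsb]; nlinarith [hb2, ht2]
  have hgam : gamma' y = (a + b) ^ 2 := by
    rw [gamma', hab]; nlinarith [ha2, hb2]
  have hgam_sqrt : Real.sqrt (gamma' y) = a + b := by
    rw [hgam, Real.sqrt_sq (by positivity)]
  constructor
  · intro hsle
    have htab : t ≤ a + b := by
      rw [htdef, ← hgam_sqrt]
      exact Real.sqrt_le_sqrt hsle
    by_cases h1 : s < y <;> by_cases h2 : s < 1 - y
    · rw [if_pos h1, if_pos h2]; norm_num
    · rw [if_pos h1, if_neg h2, hLp]
      nlinarith [mul_pos ht0 hb0, ht2, hb2]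
    · rw [if_neg h1, if_pos h2, hLm]
      nlinarith [mul_pos ht0 ha0, ht2, ha2]
    · rw [if_neg h1, if_neg h2, hLm, hLp]
      nlinarith [mul_nonneg ht0.le (by linarith : (0:ℝ) ≤ a + b - t), ht2, ha2, hb2]
  · intro hgl
    have hg1 : (1:ℝ) ≤ gamma' y := by
      rw [gamma']; have := Real.sqrt_nonneg (y * (1 - y)); linarith
    have h1 : ¬ s < y := by push_neg; linarith
    have h2 : ¬ s < 1 - y := by push_neg; linarith
    have htab : a + b < t := by
      rw [htdef, ← hgam_sqrt]
      exact Real.sqrt_lt_sqrt (by positivity) hgl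
    rw [if_neg h1, if_neg h2, hLm, hLp]
    nlinarith [mul_pos ht0 (by linarith : (0:ℝ) < t - (a + b)), ht2, ha2, hb2]
end
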